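/- Let p be an odd prime and equip ℤ² with the quadratic form Q(x,y) = x² + y². Among the index-p sublattices Ω of ℤ², those for which Q takes values in pℤ on all of Ω (equivalently, the rescaled form Q/p is integer-valued on Ω) are exactly the lattices Ω_u = ℤ(e₁ + u e₂) + ℤ(p e₂) with u² ≡ -1 (mod p). In particular there are two such sublattices if p ≡ 1 (mod 4) and none if p ≡ 3 (mod 4). -/
import Mathlib

lemma aux_mem_span (p u : ℤ) (v : Fin 2 → ℤ) :
    v ∈ Submodule.span ℤ ({![1, u], ![0, p]} : Set (Fin 2 → ℤ)) ↔ p ∣ v 1 - u * v 0 := by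
  rw [Submodule.mem_span_pair]
  constructor
  · rintro ⟨m, n, rfl⟩
    refine ⟨n, ?_⟩
    simp [smul_eq_mul]
    ring
  · rintro ⟨n, hn⟩
    refine ⟨v 0, n, ?_⟩
    funext i
    fin_cases i <;> simp [smul_eq_mul] <;> linarith

noncomputable def auxMap (p : ℕ) (u : ℤ) : (Fin 2 → ℤ) →ₗ[ℤ] ZMod p where
  toFun v := ((v 1 - u * v 0 : ℤ) : ZMod p)
  map_add' x y := by push_cast [Pi.add_apply]; ring
  map_smul' z v := by
    simp only [Pi.smul_apply, smul_eq_mul, RingHom.id_apply, zsmul_eq_mul]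
    push_cast
    ring

lemma aux_card (p : ℕ) (u : ℤ) :
    Nat.card ((Fin 2 → ℤ) ⧸ Submodule.span ℤ ({![1, u], ![0, (p : ℤ)]} : Set (Fin 2 → ℤ)))
      = p := by
  have hker : Submodule.span ℤ ({![1, u], ![0, (p : ℤ)]} : Set (Fin 2 → ℤ))
      = LinearMap.ker (auxMap p u) := by
    ext v
    rw [aux_mem_span, LinearMap.mem_ker]
    show _ ↔ ((v 1 - u * v 0 : ℤ) : ZMod p) = 0
    rw [ZMod.intCast_zmod_eq_zero_iff_dvd]
  have hsurj : Function.Surjective (auxMap p u) := by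
    intro x
    obtain ⟨z, rfl⟩ := ZMod.intCast_surjective x
    refine ⟨![0, z], ?_⟩
    show ((![0, z] 1 - u * ![0, z] 0 : ℤ) : ZMod p) = _
    simp
  have e1 := Submodule.quotEquivOfEq _ _ hker
  have e2 := (auxMap p u).quotKerEquivOfSurjective hsurj
  rw [Nat.card_congr (e1.trans e2).toEquiv, Nat.card_zmod]

lemma aux_smul_mem (p : ℕ) (Ω : Submodule ℤ (Fin 2 → ℤ))
    (hcard : Nat.card ((Fin 2 → ℤ) ⧸ Ω) = p) (v : Fin 2 → ℤ) : (p : ℤ) • v ∈ Ω := by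
  have h : (p : ℤ) • Submodule.Quotient.mk (p := Ω) v = 0 := by
    have h0 : Nat.card ((Fin 2 → ℤ) ⧸ Ω) • Submodule.Quotient.mk (p := Ω) v = 0 :=
      card_nsmul_eq_zero'
    rw [hcard] at h0
    rw [← Nat.cast_smul_eq_nsmul ℤ] at h0
    exact h0
  rwa [← Submodule.Quotient.mk_smul, Submodule.Quotient.mk_eq_zero] at h

noncomputable def auxPi (p : ℕ) : (Fin 2 → ℤ) →ₗ[ℤ] (Fin 2 → ZMod p) where
  toFun v i := ((v i : ℤ) : ZMod p)
  map_add' x y := by funext i; push_cast [Pi.add_apply]; ring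
  map_smul' z v := by
    funext i
    simp only [Pi.smul_apply, smul_eq_mul, RingHom.id_apply, zsmul_eq_mul]
    push_cast; ring

lemma aux_exists_unit (p : ℕ) (hp : p.Prime) (Ω : Submodule ℤ (Fin 2 → ℤ))
    (hcard : Nat.card ((Fin 2 → ℤ) ⧸ Ω) = p) :
    ∃ w ∈ Ω, ¬ ((p : ℤ) ∣ w 0 ∧ (p : ℤ) ∣ w 1) := by
  by_contra hc
  push_neg at hc
  have hle : Ω ≤ LinearMap.ker (auxPi p) := by
    intro w hw
    obtain ⟨h0, h1⟩ := hc w hw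
    have : ∀ i, ((w i : ℤ) : ZMod p) = 0 := by
      intro i
      rw [ZMod.intCast_zmod_eq_zero_iff_dvd]
      fin_cases i <;> assumption
    exact LinearMap.mem_ker.mpr (funext fun i => this i)
  -- build surjection from quotient onto (Fin 2 → ZMod p)
  have hfin : Finite ((Fin 2 → ℤ) ⧸ Ω) := Nat.finite_of_card_ne_zero (hcard ▸ hp.pos.ne')
  have hsurjPi : Function.Surjective (auxPi p) := by
    intro x
    refine ⟨fun i => ((x i).val : ℤ), funext fun i => ?_⟩
    haveI : NeZero p := ⟨hp.ne_zero⟩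
    show (((x i).val : ℤ) : ZMod p) = x i
    push_cast
    exact ZMod.natCast_rightInverse (x i)
  set f := Ω.liftQ (auxPi p) hle with hf
  have hfsurj : Function.Surjective f := by
    intro x
    obtain ⟨v, hv⟩ := hsurjPi x
    exact ⟨Submodule.Quotient.mk v, by rwa [hf, Submodule.liftQ_apply]⟩
  have hle2 : Nat.card (Fin 2 → ZMod p) ≤ Nat.card ((Fin 2 → ℤ) ⧸ Ω) :=
    Nat.card_le_card_of_surjective f hfsurj
  rw [hcard, Nat.card_fun, Nat.card_zmod] at hle2
  have h2 : Nat.card (Fin 2) = 2 := by simp [Nat.card_eq_fintype_card]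
  rw [h2] at hle2
  have := hp.two_le
  nlinarith

lemma aux_backward (p : ℕ) (u : ℕ) (hu : (p : ℤ) ∣ (u : ℤ) ^ 2 + 1) (v : Fin 2 → ℤ)
    (hv : v ∈ Submodule.span ℤ ({![1, (u : ℤ)], ![0, (p : ℤ)]} : Set (Fin 2 → ℤ))) :
    (p : ℤ) ∣ v 0 ^ 2 + v 1 ^ 2 := by
  rw [aux_mem_span] at hv
  have h : v 0 ^ 2 + v 1 ^ 2
      = ((u : ℤ) ^ 2 + 1) * v 0 ^ 2 + (v 1 - u * v 0) * (v 1 + u * v 0) := by ring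
  rw [h]
  exact dvd_add (hu.mul_right _) (hv.mul_right _)

lemma aux_forward (p : ℕ) (hp : p.Prime) (hodd : Odd p)
    (Ω : Submodule ℤ (Fin 2 → ℤ))
    (hcard : Nat.card ((Fin 2 → ℤ) ⧸ Ω) = p)
    (hdiv : ∀ v ∈ Ω, (p : ℤ) ∣ v 0 ^ 2 + v 1 ^ 2)
    (w : Fin 2 → ℤ) (hwΩ : w ∈ Ω) (hw : ¬ ((p : ℤ) ∣ w 0 ∧ (p : ℤ) ∣ w 1))
    (aux_mem_span : ∀ (P u : ℤ) (v : Fin 2 → ℤ),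
      v ∈ Submodule.span ℤ ({![1, u], ![0, P]} : Set (Fin 2 → ℤ)) ↔ P ∣ v 1 - u * v 0)
    (aux_smul_mem : ∀ v : Fin 2 → ℤ, (p : ℤ) • v ∈ Ω) :
    ∃ u < p, (p : ℤ) ∣ (u : ℤ) ^ 2 + 1 ∧
      Ω = Submodule.span ℤ {![1, (u : ℤ)], ![0, (p : ℤ)]} := by
  haveI : Fact p.Prime := ⟨hp⟩
  haveI : NeZero p := ⟨hp.ne_zero⟩
  have hpZ : Prime (p : ℤ) := Nat.prime_iff_prime_int.mp hp
  have hw0 : ¬ (p : ℤ) ∣ w 0 := by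
    intro h0
    apply hw
    refine ⟨h0, ?_⟩
    have h1 : (p : ℤ) ∣ w 1 ^ 2 := by
      have h2 := hdiv w hwΩ
      have h3 : (p : ℤ) ∣ (w 0 ^ 2 + w 1 ^ 2) - w 0 * w 0 := dvd_sub h2 (h0.mul_right _)
      have h4 : (w 0 ^ 2 + w 1 ^ 2) - w 0 * w 0 = w 1 ^ 2 := by ring
      rwa [h4] at h3
    exact hpZ.dvd_of_dvd_pow h1
  set a : ZMod p := ((w 0 : ℤ) : ZMod p) with ha_def
  set b : ZMod p := ((w 1 : ℤ) : ZMod p) with hb_def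
  have ha : a ≠ 0 := by
    rw [ha_def, Ne, ZMod.intCast_zmod_eq_zero_iff_dvd]; exact hw0
  have hab : a ^ 2 + b ^ 2 = 0 := by
    have := hdiv w hwΩ
    have h := (ZMod.intCast_zmod_eq_zero_iff_dvd _ p).mpr this
    push_cast at h
    exact h
  set x : ZMod p := b * a⁻¹ with hx_def
  have hx : x ^ 2 = -1 := by
    have hainv : a * a⁻¹ = 1 := ZMod.mul_inv_of_unit a (Ne.isUnit ha)
    have hb2 : b ^ 2 = -(a^2) := by linear_combination hab
    calc x ^ 2 = b^2 * (a⁻¹)^2 := by rw [hx_def]; ring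
    _ = -(a^2) * (a⁻¹)^2 := by rw [hb2]
    _ = -((a*a⁻¹)^2) := by ring
    _ = -1 := by rw [hainv]; ring
  have hba : b = x * a := by
    have hainv : a⁻¹ * a = 1 := by
      rw [mul_comm]; exact ZMod.mul_inv_of_unit a (Ne.isUnit ha)
    calc b = b * (a⁻¹ * a) := by rw [hainv, mul_one]
    _ = x * a := by rw [hx_def]; ring
  have hux : ((x.val : ℕ) : ZMod p) = x := ZMod.natCast_rightInverse x
  refine ⟨x.val, ZMod.val_lt x, ?_, ?_⟩
  · rw [← ZMod.intCast_zmod_eq_zero_iff_dvd]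
    push_cast
    rw [hux, hx]; ring
  · have hp3 : ¬ (p : ℤ) ∣ 2 := by
      intro h2
      have := Int.le_of_dvd (by norm_num) h2
      have h2' := hp.two_le
      have hne2 : p ≠ 2 := by rintro rfl; norm_num [Nat.odd_iff] at hodd
      omega
    apply le_antisymm
    · intro v hv
      rw [aux_mem_span]
      apply (ZMod.intCast_zmod_eq_zero_iff_dvd _ p).mp
      set c0 : ZMod p := ((v 0 : ℤ) : ZMod p) with hc0
      set c1 : ZMod p := ((v 1 : ℤ) : ZMod p) with hc1
      have hvw : (p : ℤ) ∣ (v 0 + w 0) ^ 2 + (v 1 + w 1) ^ 2 := by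
        have := hdiv (v + w) (Ω.add_mem hv hwΩ)
        simpa using this
      have hcross : (p : ℤ) ∣ 2 * (v 0 * w 0 + v 1 * w 1) := by
        have h1 := hdiv v hv
        have h2 := hdiv w hwΩ
        have : (p:ℤ) ∣ ((v 0 + w 0) ^ 2 + (v 1 + w 1) ^ 2) - (v 0 ^ 2 + v 1 ^ 2)
            - (w 0 ^ 2 + w 1 ^ 2) := dvd_sub (dvd_sub hvw h1) h2
        have he : ((v 0 + w 0) ^ 2 + (v 1 + w 1) ^ 2) - (v 0 ^ 2 + v 1 ^ 2)
            - (w 0 ^ 2 + w 1 ^ 2) = 2 * (v 0 * w 0 + v 1 * w 1) := by ring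
        rwa [he] at this
      have hcross2 : (p : ℤ) ∣ v 0 * w 0 + v 1 * w 1 :=
        (hpZ.dvd_mul.mp hcross).resolve_left hp3
      have hz : c0 * a + c1 * b = 0 := by
        have h := (ZMod.intCast_zmod_eq_zero_iff_dvd _ p).mpr hcross2
        push_cast at h
        rw [hc0, hc1, ha_def, hb_def]
        push_cast
        linear_combination h
      have hz2 : a * (c0 + c1 * x) = 0 := by rw [hba] at hz; linear_combination hz
      have hz3 : c0 + c1 * x = 0 := by
        rcases mul_eq_zero.mp hz2 with h | h
        · exact absurd h ha
        · exact h
      push_cast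
      rw [hux, ← hc0, ← hc1]
      linear_combination (-x) * hz3 + c1 * hx
    · rw [Submodule.span_le]
      have hg2 : ![0, (p : ℤ)] ∈ Ω := by
        have h := aux_smul_mem ![0, 1]
        have he : (p : ℤ) • ![0, (1:ℤ)] = ![0, (p : ℤ)] := by
          funext i; fin_cases i <;> simp
        rwa [he] at h
      have hdvdw : (p : ℤ) ∣ w 1 - (x.val : ℤ) * w 0 := by
        apply (ZMod.intCast_zmod_eq_zero_iff_dvd _ p).mp
        push_cast
        rw [hux, ← ha_def, ← hb_def]
        linear_combination hba
      obtain ⟨c, hc⟩ := hdvdw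
      have hzc : (p : ℤ) • ![(0:ℤ), c] ∈ Ω := aux_smul_mem _
      have hsub : w - (p : ℤ) • ![(0:ℤ), c] = w 0 • ![1, (x.val : ℤ)] := by
        funext i <;> fin_cases i <;>
          simp only [Pi.sub_apply, Pi.smul_apply, smul_eq_mul, Fin.isValue, Fin.zero_eta,
            Fin.mk_one, Matrix.cons_val_zero, Matrix.cons_val_one, Matrix.head_cons] <;>
          linarith [hc]
      have hw0g : w 0 • ![1, (x.val : ℤ)] ∈ Ω := hsub ▸ Ω.sub_mem hwΩ hzc
      have hcop : IsCoprime (p : ℤ) (w 0) := hpZ.coprime_iff_not_dvd.mpr hw0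
      obtain ⟨s, t, hst⟩ := hcop
      have hg1 : ![1, (x.val : ℤ)] ∈ Ω := by
        have hpg : (p : ℤ) • ![1, (x.val : ℤ)] ∈ Ω := aux_smul_mem _
        have : ![1, (x.val : ℤ)] = s • ((p : ℤ) • ![1, (x.val : ℤ)])
            + t • (w 0 • ![1, (x.val : ℤ)]) := by
          rw [smul_smul, smul_smul, ← add_smul, hst, one_smul]
        rw [this]
        exact Ω.add_mem (Ω.smul_mem s hpg) (Ω.smul_mem t hw0g)
      intro y hy
      rcases hy with rfl | hy
      · exact hg1
      · rcases hy with rfl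
        exact hg2

lemma aux_count (p : ℕ) (hp : p.Prime) (hodd : Odd p) :
    Nat.card {x : ZMod p // x ^ 2 = -1} = if p % 4 = 1 then 2 else 0 := by
  haveI : Fact p.Prime := ⟨hp⟩
  have hodd' : p % 2 = 1 := Nat.odd_iff.mp hodd
  by_cases h4 : p % 4 = 1
  · rw [if_pos h4]
    obtain ⟨i, hi⟩ := (ZMod.exists_sq_eq_neg_one_iff (p := p)).mpr (by omega)
    have hi2 : i ^ 2 = -1 := by rw [sq]; exact hi.symm
    have hi0 : i ≠ 0 := by
      intro h0
      rw [h0] at hi2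
      simp at hi2
    have h2' : (2 : ZMod p) ≠ 0 := by
      have : ((2 : ℕ) : ZMod p) ≠ 0 := by
        rw [Ne, ZMod.natCast_eq_zero_iff]
        intro hdvd
        have := Nat.le_of_dvd (by norm_num) hdvd
        have h1 := hp.two_le
        omega
      simpa using this
    have hne : i ≠ -i := by
      intro h
      have h2 : (2 : ZMod p) * i = 0 := by linear_combination h
      rcases mul_eq_zero.mp h2 with h | h
      · exact h2' h
      · exact hi0 h
    have hset : {x : ZMod p | x ^ 2 = -1} = {i, -i} := by
      ext y
      simp only [Set.mem_setOf_eq, Set.mem_insert_iff, Set.mem_singleton_iff]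
      constructor
      · intro hy
        have hfac : (y - i) * (y + i) = 0 := by linear_combination hy - hi2
        rcases mul_eq_zero.mp hfac with h | h
        · left; linear_combination h
        · right; linear_combination h
      · rintro (rfl | rfl)
        · exact hi2
        · rw [neg_pow]; simp [hi2]
    show Nat.card {x : ZMod p | x ^ 2 = -1} = 2
    rw [Nat.card_congr (Equiv.setCongr hset), Nat.card_coe_set_eq, Set.ncard_pair hne]
  · rw [if_neg h4]
    have h3 : p % 4 = 3 := by omega
    have : IsEmpty {x : ZMod p // x ^ 2 = -1} := by
      constructor
      rintro ⟨x, hx⟩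
      have : IsSquare (-1 : ZMod p) := ⟨x, by rw [← sq]; exact hx.symm⟩
      exact (ZMod.exists_sq_eq_neg_one_iff.mp this) h3
    exact Nat.card_of_isEmpty

theorem stmt_9 (p : ℕ) (hp : p.Prime) (hodd : Odd p) :
    (∀ Ω : Submodule ℤ (Fin 2 → ℤ), Nat.card ((Fin 2 → ℤ) ⧸ Ω) = p →
      ((∀ v ∈ Ω, (p : ℤ) ∣ v 0 ^ 2 + v 1 ^ 2) ↔
        ∃ u < p, (p : ℤ) ∣ (u : ℤ) ^ 2 + 1 ∧
          Ω = Submodule.span ℤ {![1, (u : ℤ)], ![0, (p : ℤ)]})) ∧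
    Nat.card {Ω : Submodule ℤ (Fin 2 → ℤ) //
        Nat.card ((Fin 2 → ℤ) ⧸ Ω) = p ∧ ∀ v ∈ Ω, (p : ℤ) ∣ v 0 ^ 2 + v 1 ^ 2}
      = if p % 4 = 1 then 2 else 0 := by
  haveI : Fact p.Prime := ⟨hp⟩
  haveI : NeZero p := ⟨hp.ne_zero⟩
  have part1 : ∀ Ω : Submodule ℤ (Fin 2 → ℤ), Nat.card ((Fin 2 → ℤ) ⧸ Ω) = p →
      ((∀ v ∈ Ω, (p : ℤ) ∣ v 0 ^ 2 + v 1 ^ 2) ↔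
        ∃ u < p, (p : ℤ) ∣ (u : ℤ) ^ 2 + 1 ∧
          Ω = Submodule.span ℤ {![1, (u : ℤ)], ![0, (p : ℤ)]}) := by
    intro Ω hcard
    constructor
    · intro hdiv
      obtain ⟨w, hwΩ, hw⟩ := aux_exists_unit p hp Ω hcard
      exact aux_forward p hp hodd Ω hcard hdiv w hwΩ hw aux_mem_span
        (aux_smul_mem p Ω hcard)
    · rintro ⟨u, hu, hdvd, rfl⟩
      exact fun v hv => aux_backward p u hdvd v hv
  refine ⟨part1, ?_⟩
  let U := {u : ℕ // u < p ∧ (p : ℤ) ∣ (u : ℤ) ^ 2 + 1}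
  let T := {Ω : Submodule ℤ (Fin 2 → ℤ) //
      Nat.card ((Fin 2 → ℤ) ⧸ Ω) = p ∧ ∀ v ∈ Ω, (p : ℤ) ∣ v 0 ^ 2 + v 1 ^ 2}
  let S := {x : ZMod p // x ^ 2 = -1}
  let F : U → T := fun u => ⟨Submodule.span ℤ {![1, (u.1 : ℤ)], ![0, (p : ℤ)]},
      aux_card p (u.1 : ℤ), fun v hv => aux_backward p u.1 u.2.2 v hv⟩
  have hFbij : Function.Bijective F := by
    constructor
    · rintro ⟨u, hu⟩ ⟨u', hu'⟩ h
      have hspan : Submodule.span ℤ ({![1, (u : ℤ)], ![0, (p : ℤ)]} : Set (Fin 2 → ℤ))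
          = Submodule.span ℤ ({![1, (u' : ℤ)], ![0, (p : ℤ)]} : Set (Fin 2 → ℤ)) :=
        congrArg Subtype.val h
      have h1 : (![1, (u : ℤ)] : Fin 2 → ℤ)
          ∈ Submodule.span ℤ ({![1, (u' : ℤ)], ![0, (p : ℤ)]} : Set (Fin 2 → ℤ)) := by
        rw [← hspan]
        exact Submodule.subset_span (by simp)
      rw [aux_mem_span] at h1
      simp only [Matrix.cons_val_one, Matrix.head_cons, Matrix.cons_val_zero, mul_one] at h1
      have hz : ((u : ℕ) : ZMod p) = ((u' : ℕ) : ZMod p) := by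
        have h2 := (ZMod.intCast_zmod_eq_zero_iff_dvd _ p).mpr h1
        push_cast at h2
        linear_combination h2
      have e1 := ZMod.val_cast_of_lt hu.1
      have e2 := ZMod.val_cast_of_lt hu'.1
      refine Subtype.ext (show u = u' from ?_)
      rw [← e1, hz, e2]
    · rintro ⟨Ω, hcard, hdiv⟩
      obtain ⟨u, hu, hdvd, hΩ⟩ := (part1 Ω hcard).mp hdiv
      exact ⟨⟨u, hu, hdvd⟩, Subtype.ext hΩ.symm⟩
  let G : U → S := fun u => ⟨((u.1 : ℕ) : ZMod p), by
    have h := (ZMod.intCast_zmod_eq_zero_iff_dvd _ p).mpr u.2.2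
    push_cast at h
    linear_combination h⟩
  have hGbij : Function.Bijective G := by
    constructor
    · rintro ⟨u, hu⟩ ⟨u', hu'⟩ h
      have hz : ((u : ℕ) : ZMod p) = ((u' : ℕ) : ZMod p) := congrArg Subtype.val h
      have e1 := ZMod.val_cast_of_lt hu.1
      have e2 := ZMod.val_cast_of_lt hu'.1
      refine Subtype.ext (show u = u' from ?_)
      rw [← e1, hz, e2]
    · rintro ⟨x, hx⟩
      have hux : ((x.val : ℕ) : ZMod p) = x := ZMod.natCast_rightInverse x
      refine ⟨⟨x.val, ZMod.val_lt x, ?_⟩, Subtype.ext hux⟩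
      rw [← ZMod.intCast_zmod_eq_zero_iff_dvd]
      push_cast
      rw [hux, hx]
      ring
  calc Nat.card T = Nat.card U := (Nat.card_eq_of_bijective F hFbij).symm
  _ = Nat.card S := Nat.card_eq_of_bijective G hGbij
  _ = _ := aux_count p hp hodd
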